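/- Let q be a prime power, let ω be an element of F_{q²} not in F_q, and let G be the subgroup of PGL₂(F_q) that fixes ω under the Möbius action on P¹(F_{q²}). Writing r := ω + ω^q and s := ω^{q+1}, the group G consists exactly of the classes of the matrices [[a, −sb],[b, a−rb]] with [a:b] ∈ P¹(F_q) (and determinant nonzero). -/

import Mathlib

open Matrix
open scoped LinearAlgebra.Projectivization

/-- The Möbius action of `GL(2,K)` on the projective line `ℙ K (Fin 2 → K)`.
Since scalar matrices act trivially, this realizes the action of `PGL₂(K)`. -/
noncomputable def mobius {K : Type*} [Field K] (M : GL (Fin 2) K)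
    (p : ℙ K (Fin 2 → K)) : ℙ K (Fin 2 → K) :=
  Projectivization.map
    (LinearMap.GeneralLinearGroup.toLinearEquiv
      (Matrix.GeneralLinearGroup.toLin M)).toLinearMap
    (LinearEquiv.injective _) p

/-- The point `[x : 1]` of the projective line. -/
noncomputable def pt {K : Type*} [Field K] (x : K) : ℙ K (Fin 2 → K) :=
  Projectivization.mk K ![x, 1] (by
    intro h
    simpa using congrFun h 1)

/-!
A matrix `[[A, B], [C, D]]` fixes `[ω : 1]` exactly when `A ω + B = ω (C ω + D)`. Reducing `ω²` by
`ω² = r ω − s` turns this into `(C r + D − A) ω = C s + B`, a linear relation between `1` and `ω`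
over `F`; as `ω ∉ F` both coefficients vanish, i.e. `B = −s C` and `D = A − r C`.
-/

theorem mobius_pt_eq_pt_iff {K : Type*} [Field K] (M : GL (Fin 2) K) (x : K) :
    mobius M (pt x) = pt x ↔
      (M : Matrix (Fin 2) (Fin 2) K) 0 0 * x + (M : Matrix (Fin 2) (Fin 2) K) 0 1 =
        x * ((M : Matrix (Fin 2) (Fin 2) K) 1 0 * x + (M : Matrix (Fin 2) (Fin 2) K) 1 1) := by
  rw [mobius, pt, Projectivization.map_mk, Projectivization.mk_eq_mk_iff']
  simp only [LinearEquiv.coe_coe, LinearMap.GeneralLinearGroup.coe_toLinearEquiv,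
    Matrix.GeneralLinearGroup.toLin_apply, Matrix.mulVecLin_apply]
  constructor
  · rintro ⟨a, ha⟩
    have h0 := congrFun ha 0
    have h1 := congrFun ha 1
    simp only [Fin.isValue, Pi.smul_apply, cons_val_zero, smul_eq_mul, mulVec, dotProduct,
      Fin.sum_univ_two, cons_val_one, cons_val_fin_one, mul_one] at h0 h1
    linear_combination x * h1 - h0
  · intro h
    refine ⟨(M : Matrix (Fin 2) (Fin 2) K) 1 0 * x + (M : Matrix (Fin 2) (Fin 2) K) 1 1,
      funext fun i => ?_⟩
    fin_cases i
    · simp only [Fin.isValue, Fin.zero_eta, Pi.smul_apply, cons_val_zero, smul_eq_mul, mulVec,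
        dotProduct, Fin.sum_univ_two, cons_val_one, cons_val_fin_one, mul_one]
      linear_combination -h
    · simp [Matrix.mulVec, dotProduct, Fin.sum_univ_two]

theorem eq_zero_of_algebraMap_mul_add_eq_zero {F K : Type*} [Field F] [Ring K] [Nontrivial K]
    [Algebra F K] {ω : K} (hω : ω ∉ Set.range (algebraMap F K)) {a b : F}
    (h : algebraMap F K a * ω + algebraMap F K b = 0) : a = 0 ∧ b = 0 := by
  have ha : a = 0 := by
    by_contra ha
    refine hω ⟨-(a⁻¹ * b), ?_⟩
    calc algebraMap F K (-(a⁻¹ * b)) = a⁻¹ • -algebraMap F K b := by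
          rw [Algebra.smul_def, map_neg, map_mul, mul_neg]
      _ = a⁻¹ • (a • ω) := by rw [Algebra.smul_def a, eq_neg_of_add_eq_zero_left h]
      _ = ω := inv_smul_smul₀ ha ω
  refine ⟨ha, (algebraMap F K).injective ?_⟩
  simpa [ha] using h

theorem mobius_map_pt_eq_pt_iff {F K : Type*} [Field F] [Field K] [Algebra F K] {ω : K}
    (hω : ω ∉ Set.range (algebraMap F K)) {r s : F}
    (hquad : ω ^ 2 = algebraMap F K r * ω - algebraMap F K s) (M : GL (Fin 2) F) :
    mobius (Matrix.GeneralLinearGroup.map (algebraMap F K) M) (pt ω) = pt ω ↔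
      (M : Matrix (Fin 2) (Fin 2) F) 0 1 = -(s * (M : Matrix (Fin 2) (Fin 2) F) 1 0) ∧
        (M : Matrix (Fin 2) (Fin 2) F) 1 1 =
          (M : Matrix (Fin 2) (Fin 2) F) 0 0 - r * (M : Matrix (Fin 2) (Fin 2) F) 1 0 := by
  rw [mobius_pt_eq_pt_iff]
  simp only [Matrix.GeneralLinearGroup.map_apply]
  set A := (M : Matrix (Fin 2) (Fin 2) F) 0 0
  set B := (M : Matrix (Fin 2) (Fin 2) F) 0 1
  set C := (M : Matrix (Fin 2) (Fin 2) F) 1 0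
  set D := (M : Matrix (Fin 2) (Fin 2) F) 1 1
  constructor
  · intro h
    obtain ⟨hD, hB⟩ := eq_zero_of_algebraMap_mul_add_eq_zero hω (a := C * r + D - A)
      (b := -(C * s + B)) (by
        simp only [map_add, map_sub, map_mul, map_neg]
        linear_combination -h - algebraMap F K C * hquad)
    exact ⟨by linear_combination -hB, by linear_combination hD⟩
  · rintro ⟨hB, hD⟩
    rw [hB, hD]
    simp only [map_sub, map_mul, map_neg]
    linear_combination -algebraMap F K C * hquad

theorem exists_unit_smul_eq_iff {R : Type*} [CommRing R] [Nontrivial R] (r s : R)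
    (M : GL (Fin 2) R) :
    (∃ a b : R, ¬ (a = 0 ∧ b = 0) ∧ ∃ c : Rˣ,
        (M : Matrix (Fin 2) (Fin 2) R) = (c : R) • !![a, -(s * b); b, a - r * b]) ↔
      (M : Matrix (Fin 2) (Fin 2) R) 0 1 = -(s * (M : Matrix (Fin 2) (Fin 2) R) 1 0) ∧
        (M : Matrix (Fin 2) (Fin 2) R) 1 1 =
          (M : Matrix (Fin 2) (Fin 2) R) 0 0 - r * (M : Matrix (Fin 2) (Fin 2) R) 1 0 := by
  constructor
  · rintro ⟨a, b, -, c, hM⟩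
    rw [hM]
    simp only [Matrix.smul_apply, of_apply, cons_val', cons_val_zero, cons_val_one, empty_val',
      cons_val_fin_one, smul_eq_mul]
    constructor <;> ring
  · rintro ⟨h01, h11⟩
    refine ⟨(M : Matrix (Fin 2) (Fin 2) R) 0 0, (M : Matrix (Fin 2) (Fin 2) R) 1 0,
      fun ⟨h00, h10⟩ => M.det_ne_zero ?_, 1, ?_⟩
    · rw [det_fin_two, h00, h10]
      ring
    · rw [Units.val_one, one_smul, ← h01, ← h11]
      exact eta_fin_two _

theorem stabilizer_of_omega_description
    {F : Type*} [Field F] (q : ℕ)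
    {K : Type*} [Field K] [Algebra F K]
    (ω : K) (hω : ω ∉ Set.range (algebraMap F K))
    (r s : F) (hr : algebraMap F K r = ω + ω ^ q)
    (hs : algebraMap F K s = ω ^ (q + 1))
    (M : GL (Fin 2) F) :
    mobius (Matrix.GeneralLinearGroup.map (algebraMap F K) M) (pt ω) = pt ω ↔
      ∃ a b : F, ¬ (a = 0 ∧ b = 0) ∧ ∃ c : Fˣ,
        (M : Matrix (Fin 2) (Fin 2) F) = (c : F) • !![a, -(s * b); b, a - r * b] := by
  have hquad : ω ^ 2 = algebraMap F K r * ω - algebraMap F K s := by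
    rw [hr, hs]
    ring
  rw [mobius_map_pt_eq_pt_iff hω hquad, exists_unit_smul_eq_iff]
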